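/- The uniform distribution on ranked oriented trees with n leaves and the uniform distribution on ranked phylogenetic trees with n leaves induce the same probability distribution on ranked tree shapes with n leaves under the respective forgetful maps. -/

import Mathlib

/-- A rooted binary tree with ordered (left/right) children. -/
inductive OTree : Type
  | leaf : OTree
  | node : OTree → OTree → OTree
deriving DecidableEq

/-- Number of leaves. -/
def OTree.nLeaves : OTree → ℕ
  | .leaf => 1
  | .node l r => l.nLeaves + r.nLeaves

/-- Number of internal nodes. -/
def OTree.nInt : OTree → ℕ
  | .leaf => 0
  | .node l r => l.nInt + r.nInt + 1

/-- `t.isInt p` : the path `p` (`true` = left) leads to an internal node of `t`. -/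
def OTree.isInt : OTree → List Bool → Prop
  | .leaf, _ => False
  | .node _ _, [] => True
  | .node l _, true :: p => l.isInt p
  | .node _ r, false :: p => r.isInt p

/-- `t.isLf p` : the path `p` leads to a leaf of `t`. -/
def OTree.isLf : OTree → List Bool → Prop
  | .leaf, [] => True
  | .leaf, _ :: _ => False
  | .node _ _, [] => False
  | .node l _, true :: p => l.isLf p
  | .node _ r, false :: p => r.isLf p

/-- A ranking of the internal nodes of `t`: a bijection to `{1,…,n-1}` (here `Fin t.nInt`)
which strictly increases along every root-to-leaf path. -/
structure Ranking (t : OTree) where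
  rk : {p : List Bool // t.isInt p} → Fin t.nInt
  bij : Function.Bijective rk
  mono : ∀ p q : {p : List Bool // t.isInt p}, p.1 <+: q.1 → p.1 ≠ q.1 → rk p < rk q

/-- A ranked oriented tree. -/
def RankedOTree := Σ t : OTree, Ranking t

/-- Reorient a tree by swapping the two children at every position `p` with `σ p = true`. -/
def OTree.reorient (σ : List Bool → Bool) : OTree → OTree
  | .leaf => .leaf
  | .node l r =>
    let l' := l.reorient (fun p => σ (true :: p))
    let r' := r.reorient (fun p => σ (false :: p))
    if σ [] then .node r' l' else .node l' r'

/-- The induced map on paths: position `p` of `t` corresponds to `pmap σ p` of `t.reorient σ`. -/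
def pmap (σ : List Bool → Bool) : List Bool → List Bool
  | [] => []
  | b :: p => (xor b (σ [])) :: pmap (fun q => σ (b :: q)) p

/-- Two ranked oriented trees have the same ranked tree shape: some reorientation sends one to
the other, matching ranks. -/
def ShapeRel (x y : RankedOTree) : Prop :=
  ∃ σ : List Bool → Bool, y.1 = x.1.reorient σ ∧
    ∀ (p : {p : List Bool // x.1.isInt p}) (h : y.1.isInt (pmap σ p.1)),
      (y.2.rk ⟨pmap σ p.1, h⟩ : ℕ) = (x.2.rk p : ℕ)

/-- A ranked phylogenetic tree, presented as an oriented representative: a ranked oriented tree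
together with distinct leaf labels (a bijection from leaf positions to `Fin n`). -/
structure PhyloT where
  tree : OTree
  rank : Ranking tree
  lab : {p : List Bool // tree.isLf p} ≃ Fin tree.nLeaves

/-- Two labeled ranked oriented trees represent the same ranked phylogenetic tree:
some reorientation matches them, preserving ranks and leaf labels. -/
def PhyloRel (x y : PhyloT) : Prop :=
  ∃ σ : List Bool → Bool, y.tree = x.tree.reorient σ ∧
    (∀ (p : {p : List Bool // x.tree.isInt p}) (h : y.tree.isInt (pmap σ p.1)),
      (y.rank.rk ⟨pmap σ p.1, h⟩ : ℕ) = (x.rank.rk p : ℕ)) ∧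
    (∀ (p : {p : List Bool // x.tree.isLf p}) (h : y.tree.isLf (pmap σ p.1)),
      (y.lab ⟨pmap σ p.1, h⟩ : ℕ) = (x.lab p : ℕ))

/-- Ranked phylogenetic trees: labeled oriented representatives up to reorientation. -/
def PhyloTree := Quotient (Relation.EqvGen.setoid PhyloRel)

/-! A ranked phylogenetic tree is an orbit of leaf-labelled ranked oriented trees under
reorientation, i.e. flipping the children at some internal nodes. Because leaf labels are
distinct, the flips at the `n - 1` internal nodes act freely, so every orbit has exactly
`2 ^ (n - 1)` elements, while every ranked oriented tree carries exactly `n!` labellings.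
Hence for any set of ranked oriented trees with `n` leaves that is closed under reorientation,
`n!` times its size equals `2 ^ (n - 1)` times the number of phylogenetic trees lying over it.
Applied to a shape class and to all trees with `n` leaves, this makes the two ratios equal.
Both counts come from explicit equivalences with product types, so they hold for `Nat.card`
without any finiteness argument. -/

theorem Nat.card_sigma_of_forall_nonempty_equiv {ι β : Type*} {κ : ι → Type*}
    (h : ∀ i, Nonempty (κ i ≃ β)) : Nat.card (Σ i, κ i) = Nat.card ι * Nat.card β := by
  rw [← Nat.card_prod]
  exact Nat.card_congr
    ((Equiv.sigmaCongrRight fun i => (h i).some).trans (Equiv.sigmaEquivProd ι β))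

theorem div_eq_div_of_mul_eq_mul {K : Type*} [CommGroupWithZero K] {a b c d u v : K}
    (hu : u ≠ 0) (hv : v ≠ 0) (hac : a * u = c * v) (hbd : b * u = d * v) : a / b = c / d := by
  rw [← mul_div_mul_right a b hu, hac, hbd, mul_div_mul_right c d hv]

namespace OTree

theorem nLeaves_eq_nInt_add_one (t : OTree) : t.nLeaves = t.nInt + 1 := by
  induction t with
  | leaf => rfl
  | node l r ihl ihr => simp only [nLeaves, nInt, ihl, ihr]; omega

theorem nLeaves_reorient (σ : List Bool → Bool) (t : OTree) :
    (t.reorient σ).nLeaves = t.nLeaves := by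
  induction t generalizing σ with
  | leaf => rfl
  | node l r ihl ihr => cases h : σ [] <;> simp [reorient, nLeaves, h, ihl, ihr, Nat.add_comm]

theorem nInt_reorient (σ : List Bool → Bool) (t : OTree) :
    (t.reorient σ).nInt = t.nInt := by
  induction t generalizing σ with
  | leaf => rfl
  | node l r ihl ihr => cases h : σ [] <;> simp [reorient, nInt, h, ihl, ihr, Nat.add_comm]

theorem reorient_const_false (t : OTree) : t.reorient (fun _ => false) = t := by
  induction t with
  | leaf => rfl
  | node l r ihl ihr => simp [reorient, ihl, ihr]

theorem reorient_congr {t : OTree} {σ τ : List Bool → Bool}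
    (h : ∀ p, t.isInt p → σ p = τ p) : t.reorient σ = t.reorient τ := by
  induction t generalizing σ τ with
  | leaf => rfl
  | node l r ihl ihr =>
    simp only [reorient, h [] trivial, ihl fun p hp => h (true :: p) hp,
      ihr fun p hp => h (false :: p) hp]

theorem isInt_reorient (σ : List Bool → Bool) (t : OTree) (p : List Bool) :
    (t.reorient σ).isInt (pmap σ p) ↔ t.isInt p := by
  induction t generalizing σ p with
  | leaf => simp [reorient, isInt]
  | node l r ihl ihr =>
    cases p with
    | nil => cases h : σ [] <;> simp [reorient, pmap, isInt, h]
    | cons b p => cases b <;> cases h : σ [] <;> simp [reorient, pmap, isInt, h, ihl, ihr]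

theorem isLf_reorient (σ : List Bool → Bool) (t : OTree) (p : List Bool) :
    (t.reorient σ).isLf (pmap σ p) ↔ t.isLf p := by
  induction t generalizing σ p with
  | leaf => cases p <;> simp [reorient, pmap, isLf]
  | node l r ihl ihr =>
    cases p with
    | nil => cases h : σ [] <;> simp [reorient, pmap, isLf, h]
    | cons b p => cases b <;> cases h : σ [] <;> simp [reorient, pmap, isLf, h, ihl, ihr]

theorem isInt_of_isLf_of_prefix {t : OTree} {p q : List Bool} (hq : t.isLf q)
    (hpq : p <+: q) (hne : p ≠ q) : t.isInt p := by
  induction t generalizing p q with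
  | leaf =>
    cases q with
    | nil => exact absurd (List.prefix_nil.mp hpq) hne
    | cons => exact hq.elim
  | node l r ihl ihr =>
    cases p with
    | nil => trivial
    | cons b p =>
      cases q with
      | nil => exact hq.elim
      | cons c q =>
        obtain ⟨rfl, hpq'⟩ := List.cons_prefix_cons.mp hpq
        cases b
        · exact ihr hq hpq' (by simpa using hne)
        · exact ihl hq hpq' (by simpa using hne)

theorem exists_isLf (t : OTree) : ∃ p, t.isLf p := by
  induction t with
  | leaf => exact ⟨[], trivial⟩
  | node l r ihl ihr => obtain ⟨p, hp⟩ := ihl; exact ⟨true :: p, hp⟩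

theorem exists_isLf_of_isInt {t : OTree} {q : List Bool} (hq : t.isInt q) :
    ∃ p, t.isLf p ∧ q <+: p ∧ q ≠ p := by
  induction t generalizing q with
  | leaf => exact hq.elim
  | node l r ihl ihr =>
    cases q with
    | nil =>
      obtain ⟨p, hp⟩ := l.exists_isLf
      exact ⟨true :: p, hp, List.nil_prefix, by simp⟩
    | cons b q =>
      cases b
      · obtain ⟨p, hp, hpre, hne⟩ := ihr hq
        exact ⟨false :: p, hp, List.cons_prefix_cons.mpr ⟨rfl, hpre⟩, by simpa using hne⟩
      · obtain ⟨p, hp, hpre, hne⟩ := ihl hq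
        exact ⟨true :: p, hp, List.cons_prefix_cons.mpr ⟨rfl, hpre⟩, by simpa using hne⟩

theorem isInt_of_isInt_of_prefix {t : OTree} {p q : List Bool} (hq : t.isInt q)
    (hpq : p <+: q) : t.isInt p := by
  obtain ⟨r, hr, hqr, hqr'⟩ := exists_isLf_of_isInt hq
  exact isInt_of_isLf_of_prefix hr (hpq.trans hqr) fun h =>
    hqr' (hqr.eq_of_length_le (h ▸ hpq.length_le))

def isLfNodeEquiv (l r : OTree) :
    {p // (node l r).isLf p} ≃ {p // l.isLf p} ⊕ {p // r.isLf p} where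
  toFun
    | ⟨true :: p, h⟩ => .inl ⟨p, h⟩
    | ⟨false :: p, h⟩ => .inr ⟨p, h⟩
  invFun
    | .inl p => ⟨true :: p.1, p.2⟩
    | .inr p => ⟨false :: p.1, p.2⟩
  left_inv := by rintro ⟨_ | ⟨_ | _, p⟩, h⟩ <;> first | exact h.elim | rfl
  right_inv := by rintro (p | p) <;> rfl

theorem nonempty_isLf_equiv (t : OTree) : Nonempty ({p // t.isLf p} ≃ Fin t.nLeaves) := by
  induction t with
  | leaf =>
    show Nonempty (_ ≃ Fin 1)
    refine ⟨⟨fun _ => 0, fun _ => ⟨[], trivial⟩, ?_, fun i => Subsingleton.elim _ _⟩⟩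
    rintro ⟨_ | _, h⟩
    · rfl
    · exact h.elim
  | node l r ihl ihr =>
    obtain ⟨el⟩ := ihl
    obtain ⟨er⟩ := ihr
    exact ⟨(isLfNodeEquiv l r).trans ((el.sumCongr er).trans finSumFinEquiv)⟩

end OTree

section Reorientation

variable (σ τ : List Bool → Bool)

theorem pmap_const_false (p : List Bool) : pmap (fun _ => false) p = p := by
  induction p with
  | nil => rfl
  | cons b p ih => simp [pmap, ih]

theorem pmap_append (p q : List Bool) :
    pmap σ (p ++ q) = pmap σ p ++ pmap (fun r => σ (p ++ r)) q := by
  induction p generalizing σ with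
  | nil => rfl
  | cons b p ih => simp [pmap, ih]

theorem pmap_prefix {p q : List Bool} (h : p <+: q) : pmap σ p <+: pmap σ q := by
  obtain ⟨r, rfl⟩ := h
  exact ⟨_, (pmap_append σ p r).symm⟩

def reorientComp : List Bool → Bool := fun p => xor (σ p) (τ (pmap σ p))

theorem pmap_pmap (p : List Bool) : pmap τ (pmap σ p) = pmap (reorientComp σ τ) p := by
  induction p generalizing σ τ with
  | nil => rfl
  | cons b p ih =>
    simp only [pmap, reorientComp, List.cons.injEq, ih]
    exact ⟨by cases b <;> cases σ [] <;> cases τ [] <;> rfl, rfl⟩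

theorem reorient_reorient (t : OTree) :
    (t.reorient σ).reorient τ = t.reorient (reorientComp σ τ) := by
  induction t generalizing σ τ with
  | leaf => rfl
  | node l r ihl ihr =>
    cases hσ : σ [] <;> cases hτ : τ [] <;>
      simp [OTree.reorient, reorientComp, pmap, hσ, hτ, ihl, ihr] <;> exact ⟨rfl, rfl⟩

def reorientInv (σ : List Bool → Bool) : List Bool → Bool
  | [] => σ []
  | b :: q => reorientInv (fun p => σ (xor b (σ []) :: p)) q

theorem reorientInv_pmap (p : List Bool) : reorientInv σ (pmap σ p) = σ p := by
  induction p generalizing σ with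
  | nil => rfl
  | cons b p ih => simpa [pmap, reorientInv] using ih _

theorem apply_pmap_reorientInv (q : List Bool) :
    σ (pmap (reorientInv σ) q) = reorientInv σ q := by
  induction q generalizing σ with
  | nil => rfl
  | cons b q ih => exact ih fun p => σ (xor b (σ []) :: p)

theorem reorientComp_reorientInv : reorientComp σ (reorientInv σ) = fun _ => false := by
  funext p
  simp [reorientComp, reorientInv_pmap]

theorem reorientComp_reorientInv_left : reorientComp (reorientInv σ) σ = fun _ => false := by
  funext q
  simp [reorientComp, apply_pmap_reorientInv]

theorem pmap_reorientInv_pmap (p : List Bool) : pmap (reorientInv σ) (pmap σ p) = p := by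
  rw [pmap_pmap, reorientComp_reorientInv, pmap_const_false]

theorem pmap_pmap_reorientInv (q : List Bool) : pmap σ (pmap (reorientInv σ) q) = q := by
  rw [pmap_pmap, reorientComp_reorientInv_left, pmap_const_false]

theorem reorient_reorientInv (t : OTree) : (t.reorient σ).reorient (reorientInv σ) = t := by
  rw [reorient_reorient, reorientComp_reorientInv, OTree.reorient_const_false]

theorem pmap_injective : Function.Injective (pmap σ) :=
  Function.LeftInverse.injective (pmap_reorientInv_pmap σ)

variable {σ τ}

theorem pmap_congr {p : List Bool} (h : ∀ q, q <+: p → q ≠ p → σ q = τ q) :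
    pmap σ p = pmap τ p := by
  induction p generalizing σ τ with
  | nil => rfl
  | cons b p ih =>
    simp only [pmap, h [] List.nil_prefix (by simp), List.cons.injEq, true_and]
    exact ih fun q hq hne =>
      h (b :: q) (List.cons_prefix_cons.mpr ⟨rfl, hq⟩) (by simpa using hne)

theorem eq_of_pmap_eq {p q : List Bool} (h : pmap σ p = pmap τ p) (hq : q <+: p)
    (hne : q ≠ p) : σ q = τ q := by
  induction p generalizing σ τ q with
  | nil => exact absurd (List.prefix_nil.mp hq) hne
  | cons b p ih =>
    simp only [pmap, List.cons.injEq, Bool.xor_right_inj] at h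
    cases q with
    | nil => exact h.1
    | cons c q =>
      obtain ⟨rfl, hq'⟩ := List.cons_prefix_cons.mp hq
      exact ih (σ := fun r => σ (c :: r)) (τ := fun r => τ (c :: r)) h.2 hq'
        (by simpa using hne)

end Reorientation

theorem OTree.pmap_congr_of_isInt {t : OTree} {σ τ : List Bool → Bool}
    (h : ∀ p, t.isInt p → σ p = τ p) {q : List Bool} (hq : t.isInt q) :
    pmap σ q = pmap τ q :=
  pmap_congr fun r hr _ => h r (isInt_of_isInt_of_prefix hq hr)

theorem OTree.pmap_congr_of_isLf {t : OTree} {σ τ : List Bool → Bool}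
    (h : ∀ p, t.isInt p → σ p = τ p) {q : List Bool} (hq : t.isLf q) :
    pmap σ q = pmap τ q :=
  pmap_congr fun r hr hne => h r (isInt_of_isLf_of_prefix hq hr hne)

theorem OTree.eqOn_isInt_of_pmap_eq {t : OTree} {σ τ : List Bool → Bool}
    (h : ∀ p, t.isLf p → pmap σ p = pmap τ p) {q : List Bool} (hq : t.isInt q) :
    σ q = τ q := by
  obtain ⟨p, hp, hqp, hne⟩ := exists_isLf_of_isInt hq
  exact eq_of_pmap_eq (h p hp) hqp hne

def ReorientInvariant (pos : OTree → List Bool → Prop) : Prop :=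
  ∀ σ t p, pos (t.reorient σ) (pmap σ p) ↔ pos t p

theorem reorientInvariant_isInt : ReorientInvariant OTree.isInt := OTree.isInt_reorient

theorem reorientInvariant_isLf : ReorientInvariant OTree.isLf := OTree.isLf_reorient

def ReorientInvariant.pathEquiv {pos : OTree → List Bool → Prop}
    (hpos : ReorientInvariant pos) (σ : List Bool → Bool) (t : OTree) :
    {p // pos t p} ≃ {q // pos (t.reorient σ) q} where
  toFun p := ⟨pmap σ p, (hpos σ t p).mpr p.2⟩
  invFun q := ⟨pmap (reorientInv σ) q,
    (hpos σ t _).mp (by rw [pmap_pmap_reorientInv]; exact q.2)⟩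
  left_inv p := Subtype.ext (pmap_reorientInv_pmap σ p)
  right_inv q := Subtype.ext (pmap_pmap_reorientInv σ q)

def AgreeAlong (pos : OTree → List Bool → Prop) {s t : OTree} (σ : List Bool → Bool)
    (f : {p // pos s p} → ℕ) (g : {q // pos t q} → ℕ) : Prop :=
  ∀ (p : {p // pos s p}) (h : pos t (pmap σ p.1)), g ⟨pmap σ p.1, h⟩ = f p

namespace AgreeAlong

variable {pos : OTree → List Bool → Prop} {s t : OTree} {σ τ : List Bool → Bool}
  {f : {p // pos s p} → ℕ} {g : {q // pos t q} → ℕ}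

theorem refl (f : {p // pos s p} → ℕ) : AgreeAlong pos (fun _ => false) f f :=
  fun p _ => congrArg f (Subtype.ext (pmap_const_false p.1))

theorem symm (h : AgreeAlong pos σ f g) : AgreeAlong pos (reorientInv σ) g f := by
  intro q hq
  rw [← h ⟨_, hq⟩ (by rw [pmap_pmap_reorientInv]; exact q.2)]
  exact congrArg g (Subtype.ext (pmap_pmap_reorientInv σ q.1))

theorem trans (hpos : ReorientInvariant pos) (ht : t = s.reorient σ) {u : OTree}
    {k : {r // pos u r} → ℕ} (h₁ : AgreeAlong pos σ f g) (h₂ : AgreeAlong pos τ g k) :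
    AgreeAlong pos (reorientComp σ τ) f k := by
  intro p hp
  have hpt : pos t (pmap σ p.1) := ht ▸ (hpos σ s p.1).mpr p.2
  rw [← h₁ p hpt, ← h₂ ⟨_, hpt⟩ (by rwa [pmap_pmap])]
  exact congrArg k (Subtype.ext (pmap_pmap σ τ p.1).symm)

theorem apply_eq (hpos : ReorientInvariant pos) (ht : t = s.reorient σ)
    (hστ : ∀ p, pos s p → pmap σ p = pmap τ p) {t' : OTree} {g' : {q // pos t' q} → ℕ}
    (h : AgreeAlong pos σ f g) (h' : AgreeAlong pos τ f g') (q : List Bool) (hq : pos t q)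
    (hq' : pos t' q) : g ⟨q, hq⟩ = g' ⟨q, hq'⟩ := by
  obtain ⟨p, rfl⟩ : ∃ p, pmap σ p = q := ⟨_, pmap_pmap_reorientInv σ q⟩
  have hp : pos s p := (hpos σ s p).mp (ht ▸ hq)
  rw [h ⟨p, hp⟩ hq, ← h' ⟨p, hp⟩ (hστ p hp ▸ hq')]
  exact congrArg g' (Subtype.ext (hστ p hp).symm)

theorem pmap_eq_of_injective (hpos : ReorientInvariant pos) (hσ : t = s.reorient σ)
    (hτ : t = s.reorient τ) (hg : Function.Injective g) (h : AgreeAlong pos σ f g)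
    (h' : AgreeAlong pos τ f g) {p : List Bool} (hp : pos s p) : pmap σ p = pmap τ p := by
  have h₁ : pos t (pmap σ p) := hσ ▸ (hpos σ s p).mpr hp
  have h₂ : pos t (pmap τ p) := hτ ▸ (hpos τ s p).mpr hp
  exact congrArg Subtype.val (hg ((h ⟨p, hp⟩ h₁).trans (h' ⟨p, hp⟩ h₂).symm))

end AgreeAlong

def Ranking.reorient {t : OTree} (k : Ranking t) (σ : List Bool → Bool) :
    Ranking (t.reorient σ) where
  rk q := finCongr (OTree.nInt_reorient σ t).symm
    (k.rk ((reorientInvariant_isInt.pathEquiv σ t).symm q))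
  bij := (Equiv.bijective _).comp (k.bij.comp (Equiv.bijective _))
  mono p q hpq hne := by
    simpa using k.mono _ _ (pmap_prefix _ hpq) ((pmap_injective _).ne hne)

namespace PhyloT

def rankVal (a : PhyloT) (p : {p // a.tree.isInt p}) : ℕ := a.rank.rk p

def labVal (a : PhyloT) (p : {p // a.tree.isLf p}) : ℕ := a.lab p

theorem labVal_injective (a : PhyloT) : Function.Injective a.labVal :=
  Fin.val_injective.comp a.lab.injective

theorem ext' {a b : PhyloT} (ht : a.tree = b.tree)
    (hr : ∀ p h₁ h₂, a.rankVal ⟨p, h₁⟩ = b.rankVal ⟨p, h₂⟩)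
    (hl : ∀ p h₁ h₂, a.labVal ⟨p, h₁⟩ = b.labVal ⟨p, h₂⟩) : a = b := by
  obtain ⟨t, ⟨ra, ha, ma⟩, la⟩ := a
  obtain ⟨t', ⟨rb, hb, mb⟩, lb⟩ := b
  obtain rfl : t = t' := ht
  obtain rfl : ra = rb := funext fun p => Fin.ext (hr p.1 p.2 p.2)
  obtain rfl : la = lb := Equiv.ext fun p => Fin.ext (hl p.1 p.2 p.2)
  rfl

def Reorients (σ : List Bool → Bool) (a b : PhyloT) : Prop :=
  b.tree = a.tree.reorient σ ∧ AgreeAlong OTree.isInt σ a.rankVal b.rankVal ∧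
    AgreeAlong OTree.isLf σ a.labVal b.labVal

variable {σ τ : List Bool → Bool} {a b c : PhyloT}

theorem Reorients.refl (a : PhyloT) : a.Reorients (fun _ => false) a :=
  ⟨a.tree.reorient_const_false.symm, AgreeAlong.refl _, AgreeAlong.refl _⟩

theorem Reorients.symm (h : a.Reorients σ b) : b.Reorients (reorientInv σ) a :=
  ⟨by rw [h.1, reorient_reorientInv], h.2.1.symm, h.2.2.symm⟩

theorem Reorients.trans (h : a.Reorients σ b) (h' : b.Reorients τ c) :
    a.Reorients (reorientComp σ τ) c :=
  ⟨by rw [h'.1, h.1, reorient_reorient], h.2.1.trans reorientInvariant_isInt h.1 h'.2.1,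
    h.2.2.trans reorientInvariant_isLf h.1 h'.2.2⟩

theorem _root_.phyloRel_equivalence : Equivalence PhyloRel where
  refl a := ⟨_, Reorients.refl a⟩
  symm := fun ⟨_, h⟩ => ⟨_, Reorients.symm h⟩
  trans := fun ⟨_, h⟩ ⟨_, h'⟩ => ⟨_, Reorients.trans h h'⟩

theorem Reorients.eq (hb : a.Reorients σ b) (hc : a.Reorients τ c)
    (h : ∀ p, a.tree.isInt p → σ p = τ p) : b = c :=
  ext' (by rw [hb.1, hc.1, OTree.reorient_congr h])
    (hb.2.1.apply_eq reorientInvariant_isInt hb.1 (fun _ => OTree.pmap_congr_of_isInt h)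
      hc.2.1)
    (hb.2.2.apply_eq reorientInvariant_isLf hb.1 (fun _ => OTree.pmap_congr_of_isLf h)
      hc.2.2)

-- Distinct labels force `σ` and `τ` to send each leaf to the same place, and the path to a
-- leaf records the flips at all internal nodes above it.
theorem Reorients.eqOn (hσ : a.Reorients σ b) (hτ : a.Reorients τ b) (p : List Bool)
    (hp : a.tree.isInt p) : σ p = τ p :=
  OTree.eqOn_isInt_of_pmap_eq (fun _ => hσ.2.2.pmap_eq_of_injective reorientInvariant_isLf
    hσ.1 hτ.1 b.labVal_injective hτ.2.2) hp

def reorient (σ : List Bool → Bool) (a : PhyloT) : PhyloT where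
  tree := a.tree.reorient σ
  rank := a.rank.reorient σ
  lab := ((reorientInvariant_isLf.pathEquiv σ a.tree).symm.trans a.lab).trans
    (finCongr (OTree.nLeaves_reorient σ a.tree).symm)

theorem reorients_reorient (σ : List Bool → Bool) (a : PhyloT) :
    a.Reorients σ (a.reorient σ) :=
  ⟨rfl, fun p _ => congrArg (fun q => (a.rank.rk q : ℕ)) (Equiv.symm_apply_apply _ p),
    fun p _ => congrArg (fun q => (a.lab q : ℕ)) (Equiv.symm_apply_apply _ p)⟩

open Classical in
noncomputable def extendFlips (a : PhyloT) (f : {p // a.tree.isInt p} → Bool) :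
    List Bool → Bool :=
  fun p => if h : a.tree.isInt p then f ⟨p, h⟩ else false

theorem bijective_reorient_extendFlips (a : PhyloT) :
    Function.Bijective fun f => (⟨a.reorient (a.extendFlips f), _, reorients_reorient _ a⟩ :
      {b // PhyloRel a b}) := by
  constructor
  · intro f g hfg
    have hσ := reorients_reorient (a.extendFlips f) a
    have hfg' : a.reorient (a.extendFlips f) = a.reorient (a.extendFlips g) :=
      congrArg Subtype.val hfg
    have hτ := hfg' ▸ reorients_reorient (a.extendFlips g) a
    funext p
    simpa [extendFlips, p.2] using hσ.eqOn hτ p.1 p.2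
  · rintro ⟨b, σ, hb⟩
    exact ⟨fun p => σ p.1, Subtype.ext <|
      (reorients_reorient _ a).eq hb fun p hp => by simp [extendFlips, hp]⟩

noncomputable def orbitEquiv (a : PhyloT) :
    ({p // a.tree.isInt p} → Bool) ≃ {b // PhyloRel a b} :=
  Equiv.ofBijective _ a.bijective_reorient_extendFlips

end PhyloT

theorem ShapeRel.nLeaves_eq {x y : RankedOTree} (h : ShapeRel x y) :
    y.1.nLeaves = x.1.nLeaves := by
  obtain ⟨σ, hσ, -⟩ := h
  rw [hσ, OTree.nLeaves_reorient]

theorem nLeaves_eq_of_eqvGen_shapeRel {x y : RankedOTree} (h : Relation.EqvGen ShapeRel x y) :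
    x.1.nLeaves = y.1.nLeaves := by
  induction h with
  | rel _ _ h => exact h.nLeaves_eq.symm
  | refl => rfl
  | symm _ _ _ ih => exact ih.symm
  | trans _ _ _ _ _ ih₁ ih₂ => exact ih₁.trans ih₂

theorem card_phyloT_forget {n : ℕ} (P : RankedOTree → Prop)
    (hP : ∀ y, P y → y.1.nLeaves = n) :
    Nat.card {a : PhyloT // P ⟨a.tree, a.rank⟩} = Nat.card {y // P y} * n.factorial := by
  let e : {a : PhyloT // P ⟨a.tree, a.rank⟩} ≃
      Σ y : {y // P y}, ({p // y.1.1.isLf p} ≃ Fin y.1.1.nLeaves) :=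
    { toFun a := ⟨⟨⟨a.1.tree, a.1.rank⟩, a.2⟩, a.1.lab⟩
      invFun x := ⟨⟨x.1.1.1, x.1.1.2, x.2⟩, x.1.2⟩
      left_inv _ := rfl
      right_inv _ := rfl }
  rw [Nat.card_congr e, Nat.card_sigma_of_forall_nonempty_equiv (β := Equiv.Perm (Fin n)),
    Nat.card_perm, Nat.card_fin]
  intro y
  obtain ⟨el⟩ := y.1.1.nonempty_isLf_equiv
  have hn := finCongr (hP _ y.2)
  exact ⟨Equiv.equivCongr (el.trans hn) hn⟩

theorem card_phyloT_eq_card_phyloTree_mul (Q : PhyloT → Prop) (m : ℕ)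
    (hQ : ∀ a b, PhyloRel a b → Q a → Q b) (hm : ∀ a, Q a → a.tree.nInt = m) :
    Nat.card {a // Q a} = Nat.card {c : PhyloTree // ∃ a : PhyloT,
      Quotient.mk (Relation.EqvGen.setoid PhyloRel) a = c ∧ Q a} * 2 ^ m := by
  let F : {a // Q a} → {c : PhyloTree // ∃ a : PhyloT,
      Quotient.mk (Relation.EqvGen.setoid PhyloRel) a = c ∧ Q a} :=
    fun a => ⟨Quotient.mk _ a.1, a.1, rfl, a.2⟩
  rw [← Nat.card_congr (Equiv.sigmaFiberEquiv F),
    Nat.card_sigma_of_forall_nonempty_equiv (β := Fin m → Bool)]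
  · rw [Nat.card_fun, Nat.card_fin, Nat.card_eq_fintype_card (α := Bool), Fintype.card_bool]
  rintro ⟨_, a, rfl, ha⟩
  have hmk (b : PhyloT) :
      Quotient.mk (Relation.EqvGen.setoid PhyloRel) b = Quotient.mk _ a ↔ PhyloRel a b :=
    Quotient.eq.trans (phyloRel_equivalence.eqvGen_iff.trans
      ⟨phyloRel_equivalence.symm, phyloRel_equivalence.symm⟩)
  let fiber : {x // F x = ⟨_, a, rfl, ha⟩} ≃ {b // PhyloRel a b} :=
    { toFun x := ⟨x.1.1, (hmk _).mp (congrArg Subtype.val x.2)⟩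
      invFun b := ⟨⟨b.1, hQ _ _ b.2 ha⟩, Subtype.ext ((hmk _).mpr b.2)⟩
      left_inv _ := rfl
      right_inv _ := rfl }
  exact ⟨fiber.trans (a.orbitEquiv.symm.trans
    (((Equiv.ofBijective _ a.rank.bij).trans (finCongr (hm a ha))).arrowCongr (Equiv.refl _)))⟩

theorem card_mul_factorial_eq_card_phyloTree_mul (n : ℕ) (P : RankedOTree → Prop)
    (hP : ∀ y, P y → y.1.nLeaves = n) (hinv : ∀ x y, ShapeRel x y → P x → P y) :
    Nat.card {y // P y} * n.factorial =
      Nat.card {c : PhyloTree // ∃ a : PhyloT,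
        Quotient.mk (Relation.EqvGen.setoid PhyloRel) a = c ∧ P ⟨a.tree, a.rank⟩} *
      2 ^ (n - 1) := by
  rw [← card_phyloT_forget P hP]
  refine card_phyloT_eq_card_phyloTree_mul _ _
    (fun a b ⟨σ, ht, hr, _⟩ => hinv _ _ ⟨σ, ht, hr⟩) fun a ha => ?_
  have hn : a.tree.nLeaves = n := hP _ ha
  have := a.tree.nLeaves_eq_nInt_add_one
  omega

theorem stmt3_general (n : ℕ) (x₀ : RankedOTree) (hx₀ : x₀.1.nLeaves = n) :
    (Nat.card {y : RankedOTree // y.1.nLeaves = n ∧ Relation.EqvGen ShapeRel x₀ y} : ℚ) /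
        (Nat.card {y : RankedOTree // y.1.nLeaves = n})
      = (Nat.card {c : PhyloTree // ∃ a : PhyloT,
            Quotient.mk (Relation.EqvGen.setoid PhyloRel) a = c ∧
            Relation.EqvGen ShapeRel ⟨a.tree, a.rank⟩ x₀} : ℚ) /
        (Nat.card {c : PhyloTree // ∃ a : PhyloT,
            Quotient.mk (Relation.EqvGen.setoid PhyloRel) a = c ∧ a.tree.nLeaves = n}) := by
  have hclass : ∀ y, Relation.EqvGen ShapeRel y x₀ → y.1.nLeaves = n := fun y h =>
    (nLeaves_eq_of_eqvGen_shapeRel h).trans hx₀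
  have hnum : Nat.card {y : RankedOTree // y.1.nLeaves = n ∧ Relation.EqvGen ShapeRel x₀ y} =
      Nat.card {y // Relation.EqvGen ShapeRel y x₀} :=
    Nat.card_congr <| Equiv.subtypeEquivRight fun y =>
      ⟨fun h => h.2.symm, fun h => ⟨hclass y h, h.symm⟩⟩
  rw [hnum]
  refine div_eq_div_of_mul_eq_mul (u := (n.factorial : ℚ)) (v := 2 ^ (n - 1))
    (by positivity) (by positivity) ?_ ?_
  · exact_mod_cast card_mul_factorial_eq_card_phyloTree_mul n _ hclass
      fun x y hxy hx => (Relation.EqvGen.rel _ _ hxy).symm.trans _ _ _ hx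
  · exact_mod_cast card_mul_factorial_eq_card_phyloTree_mul n (·.1.nLeaves = n) (fun _ => id)
      fun x y hxy hx => hxy.nLeaves_eq.trans hx

/-- the uniform distribution on ranked oriented trees with n leaves and the uniform
distribution on ranked phylogenetic trees with n leaves induce the same distribution on ranked
tree shapes (each shape being represented by a ranked oriented tree `x₀` with n leaves). -/
theorem stmt3 (n : ℕ) (hn : 1 ≤ n) (x₀ : RankedOTree) (hx₀ : x₀.1.nLeaves = n) :
    (Nat.card {y : RankedOTree // y.1.nLeaves = n ∧ Relation.EqvGen ShapeRel x₀ y} : ℚ) /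
        (Nat.card {y : RankedOTree // y.1.nLeaves = n})
      = (Nat.card {c : PhyloTree // ∃ a : PhyloT,
            Quotient.mk (Relation.EqvGen.setoid PhyloRel) a = c ∧
            Relation.EqvGen ShapeRel ⟨a.tree, a.rank⟩ x₀} : ℚ) /
        (Nat.card {c : PhyloTree // ∃ a : PhyloT,
            Quotient.mk (Relation.EqvGen.setoid PhyloRel) a = c ∧ a.tree.nLeaves = n}) :=
  stmt3_general n x₀ hx₀
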